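/- Fix $s_1,\dots,s_m \in \mathcal{X}$, a family $\{f_\mathcal{P}\}_{\mathcal{P} \in \mathcal{L}^\star}$ of functions $\mathcal{X} \to \{0,1\}$, and $\bar\mu = k/m$ for an integer $k$. Then for any $z \geq 0$, $\Pr_{\mathbf{v} \sim U(B(k))}\big(\sup_{\mathcal{P}} \frac{1}{m}\sum_{i=1}^m f_\mathcal{P}(s_i)(\mathbf{v}_i - \bar\mu) \geq z\big) \leq 2\,\Pr_{\mathbf{v} \sim I(\bar\mu)}\big(\sup_{\mathcal{P}} \frac{1}{m}\sum_{i=1}^m f_\mathcal{P}(s_i)(\mathbf{v}_i - \bar\mu) \geq z\big)$. -/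

import Mathlib

set_option maxHeartbeats 1600000


open Finset Classical

/-- Number of ones in a binary vector. -/
def ones {m : ℕ} (v : Fin m → Bool) : ℕ :=
  (Finset.univ.filter (fun i => v i = true)).card

/-- `B(k)`: binary vectors in `{0,1}^m` with exactly `k` ones. -/
def Bset (m k : ℕ) : Finset (Fin m → Bool) :=
  Finset.univ.filter (fun v => ones v = k)

/-- Product Bernoulli(p) weight of a binary vector. -/
noncomputable def bw {α : Type*} [Fintype α] (p : ℝ) (v : α → Bool) : ℝ :=
  ∏ i, (if v i then p else 1 - p)

/-- Supremum over the family of `(1/m) ∑ᵢ f_P(sᵢ)(vᵢ - μ̄)`. -/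
noncomputable def supQual {ι : Type*} {m : ℕ} (F : ι → Fin m → Bool) (μb : ℝ)
    (v : Fin m → Bool) : ℝ :=
  ⨆ P : ι, (1 / (m : ℝ)) * ∑ i, (if F P i then (1 : ℝ) else 0) *
    ((if v i then (1 : ℝ) else 0) - μb)

noncomputable def Pb (m k j : ℕ) : ℝ :=
  (m.choose j) * ((k:ℝ)/m)^j * (1 - (k:ℝ)/m)^(m-j)

lemma Pb_nonneg {m k j : ℕ} (hk : k ≤ m) : 0 ≤ Pb m k j := by
  have h2 : (0:ℝ) ≤ 1 - (k:ℝ)/m := by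
    rcases Nat.eq_zero_or_pos m with h | h
    · subst h; simp
    · have hm : (0:ℝ) < m := by exact_mod_cast h
      have : (k:ℝ)/m ≤ 1 := by rw [div_le_one hm]; exact_mod_cast hk
      linarith
  have h0 : (0:ℝ) ≤ (k:ℝ)/m := by positivity
  exact mul_nonneg (mul_nonneg (by positivity) (pow_nonneg h0 _)) (pow_nonneg h2 _)

lemma Pb_pos {m k j : ℕ} (hk1 : 1 ≤ k) (hkm : k < m) (hj : j ≤ m) : 0 < Pb m k j := by
  have hm : (0:ℝ) < m := by exact_mod_cast (by omega : 0 < m)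
  have hk' : (0:ℝ) < k := by exact_mod_cast hk1
  have h1 : (0:ℝ) < (k:ℝ)/m := by positivity
  have h2 : (0:ℝ) < 1 - (k:ℝ)/m := by
    rw [sub_pos, div_lt_one hm]; exact_mod_cast hkm
  have h3 : (0:ℝ) < m.choose j := by exact_mod_cast Nat.choose_pos hj
  exact mul_pos (mul_pos h3 (pow_pos h1 _)) (pow_pos h2 _)

lemma Pb_rec {m k : ℕ} (j : ℕ) (hj : j < m) :
    ((j:ℝ)+1) * ((m:ℝ)-k) * Pb m k (j+1) = ((m:ℝ)-j) * k * Pb m k j := by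
  rcases Nat.eq_zero_or_pos m with h | hm0
  · omega
  have hm : (0:ℝ) < m := by exact_mod_cast hm0
  have hch : ((m.choose (j+1) : ℝ)) * ((j:ℝ)+1) = (m.choose j) * ((m:ℝ) - j) := by
    have := Nat.choose_succ_right_eq m j
    have h2 : ((m.choose (j + 1) * (j + 1) : ℕ) : ℝ) = ((m.choose j * (m - j) : ℕ) : ℝ) := by
      exact_mod_cast congrArg (Nat.cast (R := ℝ)) this
    push_cast [Nat.cast_sub hj.le] at h2
    linarith [h2]
  have hq : 1 - (k:ℝ)/m = ((m:ℝ)-k)/m := by field_simp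
  have hexp : m - j = (m - (j+1)) + 1 := by omega
  unfold Pb
  rw [hq, hexp, pow_succ, pow_succ]
  linear_combination ((k:ℝ)*((m:ℝ)-k)/m * (((k:ℝ)/m)^j * ((((m:ℝ)-k))/m)^(m-(j+1)))) * hch

lemma Pb_sum {m k : ℕ} (hm : 1 ≤ m) :
    ∑ j ∈ Finset.range (m+1), Pb m k j = 1 := by
  have h := add_pow ((k:ℝ)/m) (1 - (k:ℝ)/m) m
  have h1 : ((k:ℝ)/m + (1 - (k:ℝ)/m)) = 1 := by ring
  rw [h1, one_pow] at h
  refine Eq.trans (Finset.sum_congr rfl ?_) h.symm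
  intro j _
  unfold Pb
  ring

lemma Pb_mean {m k : ℕ} (hm : 1 ≤ m) :
    ∑ j ∈ Finset.range (m+1), (j:ℝ) * Pb m k j = k := by
  have hm' : (0:ℝ) < m := by exact_mod_cast hm
  rw [Finset.sum_range_succ']
  simp only [Nat.cast_zero, zero_mul, add_zero]
  have key : ∀ i ∈ Finset.range m, ((i+1:ℕ):ℝ) * Pb m k (i+1)
      = (k:ℝ) * ((m-1).choose i * ((k:ℝ)/m)^i * (1 - (k:ℝ)/m)^((m-1)-i)) := by
    intro i hi
    rw [Finset.mem_range] at hi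
    have hch : ((m:ℝ)) * ((m-1).choose i) = (m.choose (i+1)) * ((i:ℝ)+1) := by
      have h0 := Nat.add_one_mul_choose_eq (m-1) i
      have hm1 : (m-1) + 1 = m := by omega
      rw [hm1] at h0
      exact_mod_cast congrArg (Nat.cast (R := ℝ)) h0
    have hexp : m - (i+1) = (m-1) - i := by omega
    unfold Pb
    push_cast
    rw [hexp, pow_succ]
    have h5 : ((i:ℝ)+1) * ((m.choose (i+1)) * (((k:ℝ)/m)^i * ((k:ℝ)/m)) * (1 - (k:ℝ)/m)^((m-1)-i))
        = ((m.choose (i+1)) * ((i:ℝ)+1)) * ((k:ℝ)/m) * (((k:ℝ)/m)^i * (1 - (k:ℝ)/m)^((m-1)-i)) := by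
      ring
    rw [h5, ← hch]
    field_simp
  rw [Finset.sum_congr rfl key, ← Finset.mul_sum]
  have h2 : ∑ i ∈ Finset.range m, (((m-1).choose i : ℝ) * ((k:ℝ)/m)^i * (1 - (k:ℝ)/m)^((m-1)-i)) = 1 := by
    have h := add_pow ((k:ℝ)/m) (1 - (k:ℝ)/m) (m-1)
    have h1 : ((k:ℝ)/m + (1 - (k:ℝ)/m)) = 1 := by ring
    rw [h1, one_pow] at h
    have hm1 : (m-1) + 1 = m := by omega
    rw [hm1] at h
    refine Eq.trans (Finset.sum_congr rfl ?_) h.symm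
    intro j _
    ring
  rw [h2, mul_one]

lemma sideA_point {m k : ℕ} (hk1 : 1 ≤ k) (h2k : 2*k ≤ m) :
    ∀ t, 1 ≤ t → t ≤ k → Pb m k (k-t) ≤ Pb m k (k+t-1) := by
  have hkm : k < m := by omega
  have hMK : (k:ℝ) ≤ (m:ℝ) - k := by
    have : ((2*k : ℕ) : ℝ) ≤ ((m:ℕ):ℝ) := by exact_mod_cast h2k
    push_cast at this; linarith
  have hKpos : (0:ℝ) < k := by exact_mod_cast hk1
  intro t ht1'
  induction t, ht1' using Nat.le_induction with
  | base =>
    intro _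
    have h1 := Pb_rec (m := m) (k := k) (k-1) (by omega)
    have e1 : (k-1) + 1 = k := by omega
    have c1 : ((k-1:ℕ):ℝ) = (k:ℝ) - 1 := by
      push_cast [Nat.cast_sub hk1]; ring
    rw [e1, c1] at h1
    have e2 : k + 1 - 1 = k := by omega
    rw [e2]
    have hp1 : 0 ≤ Pb m k k := Pb_nonneg (by omega)
    have hp2 : 0 ≤ Pb m k (k-1) := Pb_nonneg (by omega)
    nlinarith [h1, mul_nonneg hKpos.le hp1, mul_pos hKpos (by linarith : (0:ℝ) < (m:ℝ)-k+1)]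
  | succ t ht1 IH =>
    intro htk1
    have IH' := IH (by omega)
    have hT1 : (1:ℝ) ≤ (t:ℝ) := by exact_mod_cast ht1
    have hTK : (t:ℝ) + 1 ≤ (k:ℝ) := by exact_mod_cast htk1
    have e0 : k + (t+1) - 1 = k + t := by omega
    rw [e0]
    have h1 := Pb_rec (m := m) (k := k) (k-(t+1)) (by omega)
    have e1 : (k-(t+1)) + 1 = k - t := by omega
    have c1 : ((k-(t+1):ℕ):ℝ) = (k:ℝ) - t - 1 := by
      push_cast [Nat.cast_sub htk1]; ring
    rw [e1, c1] at h1
    have h2 := Pb_rec (m := m) (k := k) (k+t-1) (by omega)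
    have e2 : (k+t-1) + 1 = k + t := by omega
    have c2 : ((k+t-1:ℕ):ℝ) = (k:ℝ) + t - 1 := by
      push_cast [Nat.cast_sub (by omega : 1 ≤ k + t)]; ring
    rw [e2, c2] at h2
    have hp1 : 0 ≤ Pb m k (k-t) := Pb_nonneg (by omega)
    have hp2 : 0 ≤ Pb m k (k+t-1) := Pb_nonneg (by omega)
    have hp3 : 0 ≤ Pb m k (k-(t+1)) := Pb_nonneg (by omega)
    have hp4 : 0 ≤ Pb m k (k+t) := Pb_nonneg (by omega)
    have q1 : (0:ℝ) ≤ (m:ℝ) - k := by linarith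
    have key : ((k:ℝ)-t)*((k:ℝ)+t)*((m:ℝ)-k)^2 * Pb m k (k-t)
        ≤ ((m:ℝ)-k+1+t)*((m:ℝ)-k+1-t)*(k:ℝ)^2 * Pb m k (k+t-1) := by
      have hA1 : (k:ℝ)^2*((m:ℝ)-k)^2 ≤ (k:ℝ)^2*((m:ℝ)-k+1)^2 := by nlinarith
      have hA2 : (t:ℝ)^2*(k:ℝ)^2 ≤ (t:ℝ)^2*((m:ℝ)-k)^2 := by
        have h9 : (k:ℝ)^2 ≤ ((m:ℝ)-k)^2 := by nlinarith [mul_le_mul hMK hMK hKpos.le q1]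
        exact mul_le_mul_of_nonneg_left h9 (sq_nonneg _)
      have c1' : 0 ≤ ((k:ℝ)-t)*((k:ℝ)+t)*((m:ℝ)-k)^2 := by
        have h1' : (0:ℝ) ≤ (k:ℝ)-t := by linarith
        have h2' : (0:ℝ) ≤ (k:ℝ)+t := by linarith
        exact mul_nonneg (mul_nonneg h1' h2') (sq_nonneg _)
      have c2' : ((k:ℝ)-t)*((k:ℝ)+t)*((m:ℝ)-k)^2 ≤ ((m:ℝ)-k+1+t)*((m:ℝ)-k+1-t)*(k:ℝ)^2 := by
        nlinarith [hA1, hA2]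
      calc ((k:ℝ)-t)*((k:ℝ)+t)*((m:ℝ)-k)^2 * Pb m k (k-t)
          ≤ ((k:ℝ)-t)*((k:ℝ)+t)*((m:ℝ)-k)^2 * Pb m k (k+t-1) :=
            mul_le_mul_of_nonneg_left IH' c1'
        _ ≤ ((m:ℝ)-k+1+t)*((m:ℝ)-k+1-t)*(k:ℝ)^2 * Pb m k (k+t-1) :=
            mul_le_mul_of_nonneg_right c2' hp2
    have hDpos : 0 < ((m:ℝ)-k+t+1)*(k:ℝ)*(((k:ℝ)+t)*((m:ℝ)-k)) := by
      have f1 : (0:ℝ) < (m:ℝ)-k+t+1 := by linarith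
      have f2 : (0:ℝ) < (k:ℝ)+t := by linarith
      have f3 : (0:ℝ) < (m:ℝ)-k := by linarith
      exact mul_pos (mul_pos f1 hKpos) (mul_pos f2 f3)
    have e3 : ((m:ℝ)-k+t+1)*(k:ℝ)*(((k:ℝ)+t)*((m:ℝ)-k)) * Pb m k (k-(t+1))
        = ((k:ℝ)-t)*((k:ℝ)+t)*((m:ℝ)-k)^2 * Pb m k (k-t) := by
      linear_combination (-((k:ℝ)+t)*((m:ℝ)-k)) * h1
    have e4 : ((m:ℝ)-k+t+1)*(k:ℝ)*(((k:ℝ)+t)*((m:ℝ)-k)) * Pb m k (k+t)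
        = ((m:ℝ)-k+1+t)*((m:ℝ)-k+1-t)*(k:ℝ)^2 * Pb m k (k+t-1) := by
      linear_combination (((m:ℝ)-k+t+1)*(k:ℝ)) * h2
    have final : ((m:ℝ)-k+t+1)*(k:ℝ)*(((k:ℝ)+t)*((m:ℝ)-k)) * Pb m k (k-(t+1))
        ≤ ((m:ℝ)-k+t+1)*(k:ℝ)*(((k:ℝ)+t)*((m:ℝ)-k)) * Pb m k (k+t) := by
      rw [e3, e4]; exact key
    exact le_of_mul_le_mul_left final hDpos

lemma mu_mono {M K s : ℝ} (hK : 0 < K) (hMK : K ≤ M - K) (hs : 0 ≤ s)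
    (h : (K-s)*(K+s+1)*(M-K)^2 ≤ (M-K-s)*(M-K+s+1)*K^2) :
    (K-(s+1))*(K+(s+1)+1)*(M-K)^2 ≤ (M-K-(s+1))*(M-K+(s+1)+1)*K^2 := by
  have h9 : K^2 ≤ (M-K)^2 := by nlinarith
  nlinarith [h, h9, mul_le_mul_of_nonneg_left h9 (by linarith : (0:ℝ) ≤ 2*s+2)]

lemma stepB {m k : ℕ} (hk1 : 1 ≤ k) (h2k : 2*k ≤ m) (s : ℕ) (hs1 : 1 ≤ s) (hsk : s+1 ≤ k)
    (hmu : ((k:ℝ)-s)*((k:ℝ)+s+1)*((m:ℝ)-k)^2 ≤ ((m:ℝ)-k-s)*((m:ℝ)-k+s+1)*(k:ℝ)^2)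
    (hyp : Pb m k (k-s) ≤ Pb m k (k+s)) : Pb m k (k-(s+1)) ≤ Pb m k (k+(s+1)) := by
  have hkm : k < m := by omega
  have hMK : (k:ℝ) ≤ (m:ℝ) - k := by
    have : ((2*k : ℕ) : ℝ) ≤ ((m:ℕ):ℝ) := by exact_mod_cast h2k
    push_cast at this; linarith
  have hKpos : (0:ℝ) < k := by exact_mod_cast hk1
  have hSK : (s:ℝ) + 1 ≤ (k:ℝ) := by exact_mod_cast hsk
  have hS1 : (1:ℝ) ≤ (s:ℝ) := by exact_mod_cast hs1
  have h1 := Pb_rec (m := m) (k := k) (k-(s+1)) (by omega)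
  have e1 : (k-(s+1)) + 1 = k - s := by omega
  have c1 : ((k-(s+1):ℕ):ℝ) = (k:ℝ) - s - 1 := by
    push_cast [Nat.cast_sub hsk]; ring
  rw [e1, c1] at h1
  -- h1 : (K-S-1+1)*(M-K)*Pb (k-s) = (M-(K-S-1))*K*Pb (k-(s+1))
  have h2 := Pb_rec (m := m) (k := k) (k+s) (by omega)
  have c2 : ((k+s:ℕ):ℝ) = (k:ℝ) + s := by push_cast; ring
  rw [c2] at h2
  -- h2 : (K+S+1)*(M-K)*Pb (k+s+1) = (M-(K+S))*K*Pb (k+s)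
  have hp1 : 0 ≤ Pb m k (k-s) := Pb_nonneg (by omega)
  have hp2 : 0 ≤ Pb m k (k+s) := Pb_nonneg (by omega)
  have hDpos : 0 < ((m:ℝ)-k+s+1)*(k:ℝ)*(((k:ℝ)+s+1)*((m:ℝ)-k)) := by
    have f1 : (0:ℝ) < (m:ℝ)-k+s+1 := by linarith
    have f2 : (0:ℝ) < (k:ℝ)+s+1 := by linarith
    have f3 : (0:ℝ) < (m:ℝ)-k := by linarith
    exact mul_pos (mul_pos f1 hKpos) (mul_pos f2 f3)
  have e3 : ((m:ℝ)-k+s+1)*(k:ℝ)*(((k:ℝ)+s+1)*((m:ℝ)-k)) * Pb m k (k-(s+1))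
      = ((k:ℝ)-s)*((k:ℝ)+s+1)*((m:ℝ)-k)^2 * Pb m k (k-s) := by
    linear_combination (-((k:ℝ)+s+1)*((m:ℝ)-k)) * h1
  have e4 : ((m:ℝ)-k+s+1)*(k:ℝ)*(((k:ℝ)+s+1)*((m:ℝ)-k)) * Pb m k (k+(s+1))
      = ((m:ℝ)-k+s+1)*(((m:ℝ)-k-s)*(k:ℝ)^2) * Pb m k (k+s) := by
    have : k + (s+1) = (k+s) + 1 := by omega
    rw [this]
    linear_combination (((m:ℝ)-k+s+1)*(k:ℝ)) * h2
  have key : ((k:ℝ)-s)*((k:ℝ)+s+1)*((m:ℝ)-k)^2 * Pb m k (k-s)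
      ≤ ((m:ℝ)-k+s+1)*(((m:ℝ)-k-s)*(k:ℝ)^2) * Pb m k (k+s) := by
    have c1' : 0 ≤ ((k:ℝ)-s)*((k:ℝ)+s+1)*((m:ℝ)-k)^2 := by
      have h1' : (0:ℝ) ≤ (k:ℝ)-s := by linarith
      have h2' : (0:ℝ) ≤ (k:ℝ)+s+1 := by linarith
      exact mul_nonneg (mul_nonneg h1' h2') (sq_nonneg _)
    calc ((k:ℝ)-s)*((k:ℝ)+s+1)*((m:ℝ)-k)^2 * Pb m k (k-s)
        ≤ ((k:ℝ)-s)*((k:ℝ)+s+1)*((m:ℝ)-k)^2 * Pb m k (k+s) :=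
          mul_le_mul_of_nonneg_left hyp c1'
      _ ≤ ((m:ℝ)-k+s+1)*(((m:ℝ)-k-s)*(k:ℝ)^2) * Pb m k (k+s) := by
          apply mul_le_mul_of_nonneg_right _ hp2
          nlinarith [hmu]
  have final : ((m:ℝ)-k+s+1)*(k:ℝ)*(((k:ℝ)+s+1)*((m:ℝ)-k)) * Pb m k (k-(s+1))
      ≤ ((m:ℝ)-k+s+1)*(k:ℝ)*(((k:ℝ)+s+1)*((m:ℝ)-k)) * Pb m k (k+(s+1)) := by
    rw [e3, e4]; exact key
  exact le_of_mul_le_mul_left final hDpos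

lemma crossingB {m k : ℕ} (hk1 : 1 ≤ k) (h2k : 2*k ≤ m) :
    ∀ s, 1 ≤ s → s+1 ≤ k → Pb m k (k-s) ≤ Pb m k (k+s) →
    (((k:ℝ)-s)*((k:ℝ)+s+1)*((m:ℝ)-k)^2 ≤ ((m:ℝ)-k-s)*((m:ℝ)-k+s+1)*(k:ℝ)^2)
      ∧ Pb m k (k-(s+1)) ≤ Pb m k (k+(s+1)) := by
  have hkm : k < m := by omega
  have hMK : (k:ℝ) ≤ (m:ℝ) - k := by
    have : ((2*k : ℕ) : ℝ) ≤ ((m:ℕ):ℝ) := by exact_mod_cast h2k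
    push_cast at this; linarith
  have hKpos : (0:ℝ) < k := by exact_mod_cast hk1
  intro s hs1'
  induction s, hs1' using Nat.le_induction with
  | base =>
    intro hk2 hyp
    have hK2 : (2:ℝ) ≤ (k:ℝ) := by exact_mod_cast hk2
    have h1 := Pb_rec (m := m) (k := k) (k-1) (by omega)
    have e1 : (k-1) + 1 = k := by omega
    have c1 : ((k-1:ℕ):ℝ) = (k:ℝ) - 1 := by push_cast [Nat.cast_sub hk1]; ring
    rw [e1, c1] at h1
    have h2 := Pb_rec (m := m) (k := k) k (by omega)
    have hpk : 0 < Pb m k k := Pb_pos hk1 hkm (by omega)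
    have hpk1 : 0 ≤ Pb m k (k+1) := Pb_nonneg (by omega)
    have hpkm1 : 0 ≤ Pb m k (k-1) := Pb_nonneg (by omega)
    have hMKpos : (0:ℝ) < (m:ℝ)-k := by linarith
    have hmono : ((k:ℝ)+1)*((m:ℝ)-k+1) * Pb m k (k-1) ≤ ((k:ℝ)+1)*((m:ℝ)-k+1) * Pb m k (k+1) := by
      apply mul_le_mul_of_nonneg_left hyp
      nlinarith
    have eL : ((k:ℝ)+1)*((m:ℝ)-k+1) * Pb m k (k-1) * (k:ℝ) = ((k:ℝ)+1)*((m:ℝ)-k)*Pb m k k * (k:ℝ) := by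
      linear_combination (-((k:ℝ)+1)) * h1
    have eR : ((k:ℝ)+1)*((m:ℝ)-k+1) * Pb m k (k+1) * ((m:ℝ)-k) = ((m:ℝ)-k+1)*((m:ℝ)-k)*(k:ℝ)*Pb m k k := by
      linear_combination ((m:ℝ)-k+1) * h2
    have big := mul_le_mul_of_nonneg_right hmono (mul_nonneg hKpos.le hMKpos.le)
    have hbL : ((k:ℝ)+1)*((m:ℝ)-k+1) * Pb m k (k-1) * ((k:ℝ)*((m:ℝ)-k))
        = (((k:ℝ)+1)*((m:ℝ)-k)) * (((m:ℝ)-k)*(k:ℝ)*Pb m k k) := by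
      linear_combination (-((k:ℝ)+1)*((m:ℝ)-k)) * h1
    have hbR : ((k:ℝ)+1)*((m:ℝ)-k+1) * Pb m k (k+1) * ((k:ℝ)*((m:ℝ)-k))
        = (((m:ℝ)-k+1)*(k:ℝ)) * (((m:ℝ)-k)*(k:ℝ)*Pb m k k) := by
      linear_combination (((m:ℝ)-k+1)*(k:ℝ)) * h2
    have g1 : (((k:ℝ)+1)*((m:ℝ)-k)) * (((m:ℝ)-k)*(k:ℝ)*Pb m k k)
        ≤ (((m:ℝ)-k+1)*(k:ℝ)) * (((m:ℝ)-k)*(k:ℝ)*Pb m k k) := by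
      rw [← hbL, ← hbR]; exact big
    have hpos : (0:ℝ) < ((m:ℝ)-k)*(k:ℝ)*Pb m k k := by
      exact mul_pos (mul_pos hMKpos hKpos) hpk
    have g2 : (((k:ℝ)+1)*((m:ℝ)-k)) ≤ (((m:ℝ)-k+1)*(k:ℝ)) :=
      le_of_mul_le_mul_right (by linarith [g1]) hpos
    have heq : (m:ℝ)-k = (k:ℝ) := by nlinarith [g2, hMK]
    constructor
    · push_cast
      rw [heq]
    · apply stepB hk1 h2k 1 le_rfl hk2 _ hyp
      push_cast
      rw [heq]
  | succ s hs1 IH =>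
    intro hsk2 hyp1
    have hSK : (s:ℝ) + 2 ≤ (k:ℝ) := by exact_mod_cast hsk2
    have hS1 : (1:ℝ) ≤ (s:ℝ) := by exact_mod_cast hs1
    have hmu1 : ((k:ℝ)-((s+1:ℕ):ℝ))*((k:ℝ)+((s+1:ℕ):ℝ)+1)*((m:ℝ)-k)^2
        ≤ ((m:ℝ)-k-((s+1:ℕ):ℝ))*((m:ℝ)-k+((s+1:ℕ):ℝ)+1)*(k:ℝ)^2 := by
      by_cases hc : Pb m k (k-s) ≤ Pb m k (k+s)
      · have hmus := (IH (by omega) hc).1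
        have h9 := mu_mono hKpos hMK (by linarith : (0:ℝ) ≤ (s:ℝ)) hmus
        push_cast
        nlinarith [h9]
      · push_neg at hc
        have h1 := Pb_rec (m := m) (k := k) (k-(s+1)) (by omega)
        have e1 : (k-(s+1)) + 1 = k - s := by omega
        have c1 : ((k-(s+1):ℕ):ℝ) = (k:ℝ) - s - 1 := by
          push_cast [Nat.cast_sub (by omega : s+1 ≤ k)]; ring
        rw [e1, c1] at h1
        have h2 := Pb_rec (m := m) (k := k) (k+s) (by omega)
        have c2 : ((k+s:ℕ):ℝ) = (k:ℝ) + s := by push_cast; ring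
        rw [c2] at h2
        have hyp1' : Pb m k (k-(s+1)) ≤ Pb m k ((k+s)+1) := by
          have e5 : k + (s+1) = (k+s)+1 := by omega
          rw [← e5]; exact hyp1
        have hpks : 0 < Pb m k (k-s) := Pb_pos hk1 (by omega) (by omega)
        have hpks2 : 0 ≤ Pb m k (k+s) := Pb_nonneg (by omega)
        have f2 : (0:ℝ) < (k:ℝ)+s+1 := by linarith
        have f3 : (0:ℝ) < (m:ℝ)-k := by linarith
        have f4 : (0:ℝ) < (m:ℝ)-k+s+1 := by linarith
        have f5 : (0:ℝ) ≤ (m:ℝ)-k-s := by linarith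
        have hmus : ((k:ℝ)-s)*((k:ℝ)+s+1)*((m:ℝ)-k)^2 ≤ ((m:ℝ)-k-s)*((m:ℝ)-k+s+1)*(k:ℝ)^2 := by
          have step1 : ((k:ℝ)-s)*((k:ℝ)+s+1)*((m:ℝ)-k)^2 * Pb m k (k-s)
              = (((k:ℝ)+s+1)*((m:ℝ)-k)) * (((m:ℝ)-k+s+1)*(k:ℝ)) * Pb m k (k-(s+1)) := by
            linear_combination (((k:ℝ)+s+1)*((m:ℝ)-k)) * h1
          have step2 : (((k:ℝ)+s+1)*((m:ℝ)-k)) * (((m:ℝ)-k+s+1)*(k:ℝ)) * Pb m k (k-(s+1))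
              ≤ (((k:ℝ)+s+1)*((m:ℝ)-k)) * (((m:ℝ)-k+s+1)*(k:ℝ)) * Pb m k ((k+s)+1) := by
            apply mul_le_mul_of_nonneg_left hyp1'
            exact mul_nonneg (mul_pos f2 f3).le (mul_pos f4 hKpos).le
          have step3 : (((k:ℝ)+s+1)*((m:ℝ)-k)) * (((m:ℝ)-k+s+1)*(k:ℝ)) * Pb m k ((k+s)+1)
              = (((m:ℝ)-k+s+1)*(k:ℝ)) * (((m:ℝ)-k-s)*(k:ℝ)) * Pb m k (k+s) := by
            linear_combination (((m:ℝ)-k+s+1)*(k:ℝ)) * h2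
          have step4 : (((m:ℝ)-k+s+1)*(k:ℝ)) * (((m:ℝ)-k-s)*(k:ℝ)) * Pb m k (k+s)
              ≤ (((m:ℝ)-k+s+1)*(k:ℝ)) * (((m:ℝ)-k-s)*(k:ℝ)) * Pb m k (k-s) := by
            apply mul_le_mul_of_nonneg_left hc.le
            exact mul_nonneg (mul_pos f4 hKpos).le (mul_nonneg f5 hKpos.le)
          have chain : ((k:ℝ)-s)*((k:ℝ)+s+1)*((m:ℝ)-k)^2 * Pb m k (k-s)
              ≤ ((m:ℝ)-k-s)*((m:ℝ)-k+s+1)*(k:ℝ)^2 * Pb m k (k-s) := by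
            rw [step1]
            calc (((k:ℝ)+s+1)*((m:ℝ)-k)) * (((m:ℝ)-k+s+1)*(k:ℝ)) * Pb m k (k-(s+1))
                ≤ (((k:ℝ)+s+1)*((m:ℝ)-k)) * (((m:ℝ)-k+s+1)*(k:ℝ)) * Pb m k ((k+s)+1) := step2
              _ = (((m:ℝ)-k+s+1)*(k:ℝ)) * (((m:ℝ)-k-s)*(k:ℝ)) * Pb m k (k+s) := step3
              _ ≤ (((m:ℝ)-k+s+1)*(k:ℝ)) * (((m:ℝ)-k-s)*(k:ℝ)) * Pb m k (k-s) := step4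
              _ = ((m:ℝ)-k-s)*((m:ℝ)-k+s+1)*(k:ℝ)^2 * Pb m k (k-s) := by ring
          exact le_of_mul_le_mul_right (by linarith [chain]) hpks
        have h9 := mu_mono hKpos hMK (by linarith : (0:ℝ) ≤ (s:ℝ)) hmus
        push_cast
        nlinarith [h9]
    exact ⟨hmu1, stepB hk1 h2k (s+1) (by omega) hsk2 hmu1 hyp1⟩

lemma weighted_zero {m k : ℕ} (hm : 1 ≤ m) (hk : k ≤ m) :
    ∑ i ∈ Finset.range (m-k), ((i:ℝ)+1) * Pb m k (k+(i+1))
      = ∑ i ∈ Finset.range k, ((i:ℝ)+1) * Pb m k (k-(i+1)) := by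
  have h0 : ∑ j ∈ Finset.range (m+1), ((j:ℝ)-k) * Pb m k j = 0 := by
    have h1 := Pb_mean (m := m) (k := k) hm
    have h2 := Pb_sum (m := m) (k := k) hm
    have : ∑ j ∈ Finset.range (m+1), ((j:ℝ)-k) * Pb m k j
        = (∑ j ∈ Finset.range (m+1), (j:ℝ) * Pb m k j)
          - (k:ℝ) * ∑ j ∈ Finset.range (m+1), Pb m k j := by
      rw [Finset.mul_sum, ← Finset.sum_sub_distrib]
      apply Finset.sum_congr rfl; intro j _; ring
    rw [this, h1, h2]; ring
  have hsplit : ∑ j ∈ Finset.range (m+1), ((j:ℝ)-k) * Pb m k j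
      = (∑ j ∈ Finset.range k, ((j:ℝ)-k) * Pb m k j)
        + ∑ j ∈ Finset.Ico k (m+1), ((j:ℝ)-k) * Pb m k j := by
    rw [Finset.range_eq_Ico, ← Finset.sum_Ico_consecutive _ (by omega : 0 ≤ k) (by omega : k ≤ m+1),
      ← Finset.range_eq_Ico]
  have hleft : ∑ j ∈ Finset.range k, ((j:ℝ)-k) * Pb m k j
      = - ∑ i ∈ Finset.range k, ((i:ℝ)+1) * Pb m k (k-(i+1)) := by
    rw [← Finset.sum_range_reflect (fun j => ((j:ℝ)-k) * Pb m k j) k, ← Finset.sum_neg_distrib]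
    apply Finset.sum_congr rfl
    intro i hi
    rw [Finset.mem_range] at hi
    have e1 : k - 1 - i = k - (i+1) := by omega
    rw [e1]
    have c1 : ((k-(i+1):ℕ):ℝ) = (k:ℝ) - ((i:ℝ)+1) := by
      push_cast [Nat.cast_sub (by omega : i+1 ≤ k)]
      ring
    rw [c1]
    ring
  have hright : ∑ j ∈ Finset.Ico k (m+1), ((j:ℝ)-k) * Pb m k j
      = ∑ i ∈ Finset.range (m-k), ((i:ℝ)+1) * Pb m k (k+(i+1)) := by
    rw [Finset.sum_Ico_eq_sum_range]
    have e2 : m + 1 - k = (m-k) + 1 := by omega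
    rw [e2, Finset.sum_range_succ']
    have : ∀ i ∈ Finset.range (m-k), (((k + (i+1) :ℕ):ℝ) - k) * Pb m k (k+(i+1))
        = ((i:ℝ)+1) * Pb m k (k+(i+1)) := by
      intro i _
      push_cast
      ring
    rw [Finset.sum_congr rfl this]
    push_cast
    simp
  rw [hsplit, hleft, hright] at h0
  linarith [h0]

lemma sideB_sum {m k : ℕ} (hk1 : 1 ≤ k) (h2k : 2*k ≤ m) :
    ∑ i ∈ Finset.range (m-k), Pb m k (k+(i+1)) ≤ ∑ i ∈ Finset.range k, Pb m k (k-(i+1)) := by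
  have hm : 1 ≤ m := by omega
  set N := m - k with hN
  set d : ℕ → ℝ := fun i => Pb m k (k+(i+1)) - (if i+1 ≤ k then Pb m k (k-(i+1)) else 0) with hd
  have hkN : k ≤ N := by omega
  have hsplitIf : ∀ g : ℕ → ℝ, ∑ i ∈ Finset.range N, g i * (if i+1 ≤ k then Pb m k (k-(i+1)) else 0)
      = ∑ i ∈ Finset.range k, g i * Pb m k (k-(i+1)) := by
    intro g
    rw [Finset.range_eq_Ico, ← Finset.sum_Ico_consecutive _ (by omega : 0 ≤ k) (by omega : k ≤ N),
      ← Finset.range_eq_Ico]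
    have hA : ∀ i ∈ Finset.range k, g i * (if i+1 ≤ k then Pb m k (k-(i+1)) else 0)
        = g i * Pb m k (k-(i+1)) := by
      intro i hi; rw [Finset.mem_range] at hi; rw [if_pos (by omega)]
    have hB : ∀ i ∈ Finset.Ico k N, g i * (if i+1 ≤ k then Pb m k (k-(i+1)) else 0) = 0 := by
      intro i hi; rw [Finset.mem_Ico] at hi; rw [if_neg (by omega)]; ring
    rw [Finset.sum_congr rfl hA, Finset.sum_congr rfl hB]
    simp
  -- weighted sum of d is zero
  have hw : ∑ i ∈ Finset.range N, ((i:ℝ)+1) * d i = 0 := by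
    have : ∑ i ∈ Finset.range N, ((i:ℝ)+1) * d i
        = (∑ i ∈ Finset.range N, ((i:ℝ)+1) * Pb m k (k+(i+1)))
          - ∑ i ∈ Finset.range N, ((i:ℝ)+1) * (if i+1 ≤ k then Pb m k (k-(i+1)) else 0) := by
      rw [← Finset.sum_sub_distrib]
      apply Finset.sum_congr rfl; intro i _; rw [hd]; ring
    rw [this, hsplitIf (fun i => (i:ℝ)+1), weighted_zero hm (by omega)]
    ring
  -- unweighted sum of d
  have hu : ∑ i ∈ Finset.range N, d i
      = (∑ i ∈ Finset.range N, Pb m k (k+(i+1))) - ∑ i ∈ Finset.range k, Pb m k (k-(i+1)) := by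
    have : ∑ i ∈ Finset.range N, d i
        = (∑ i ∈ Finset.range N, Pb m k (k+(i+1)))
          - ∑ i ∈ Finset.range N, (1:ℝ) * (if i+1 ≤ k then Pb m k (k-(i+1)) else 0) := by
      rw [← Finset.sum_sub_distrib]
      apply Finset.sum_congr rfl; intro i _; rw [hd]; ring
    rw [this, hsplitIf (fun _ => (1:ℝ))]
    simp
  -- crossing step
  have dstep : ∀ i, 0 ≤ d i → 0 ≤ d (i+1) := by
    intro i hdi
    rw [hd]
    simp only
    by_cases hc : i+1+1 ≤ k
    · rw [if_pos hc]
      have hyp : Pb m k (k-(i+1)) ≤ Pb m k (k+(i+1)) := by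
        rw [hd] at hdi
        simp only at hdi
        rw [if_pos (by omega)] at hdi
        linarith
      have := (crossingB hk1 h2k (i+1) (by omega) (by omega) hyp).2
      linarith [this]
    · rw [if_neg hc]
      have := Pb_nonneg (m := m) (k := k) (j := k+(i+1+1)) (by omega)
      linarith
  -- conclude sum d ≤ 0
  have hsum : ∑ i ∈ Finset.range N, d i ≤ 0 := by
    by_cases hex : ∃ i, i < N ∧ 0 < d i
    · classical
      let i0 := Nat.find hex
      obtain ⟨hi0N, hi0pos⟩ := Nat.find_spec hex
      have hmin : ∀ i, i < i0 → ¬(i < N ∧ 0 < d i) := fun i hi => Nat.find_min hex hi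
      have hge : ∀ i, i0 ≤ i → 0 ≤ d i := by
        intro i hi
        induction i, hi using Nat.le_induction with
        | base => exact hi0pos.le
        | succ i hi IH => exact dstep i IH
      have hpt : ∀ i ∈ Finset.range N, d i ≤ (((i:ℝ)+1)/((i0:ℝ)+1)) * d i := by
        intro i hi
        rw [Finset.mem_range] at hi
        have hpos0 : (0:ℝ) < (i0:ℝ)+1 := by positivity
        rcases lt_or_ge i i0 with h | h
        · have hdi : d i ≤ 0 := by
            by_contra hcon
            push_neg at hcon
            exact hmin i h ⟨by omega, hcon⟩
          have hco : ((i:ℝ)+1)/((i0:ℝ)+1) ≤ 1 := by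
            rw [div_le_one hpos0]
            have : (i:ℝ) ≤ (i0:ℝ) := by exact_mod_cast h.le
            linarith
          nlinarith [mul_nonneg (sub_nonneg.2 hco) (neg_nonneg.2 hdi)]
        · have hdi : 0 ≤ d i := hge i h
          have hco : 1 ≤ ((i:ℝ)+1)/((i0:ℝ)+1) := by
            rw [le_div_iff₀ hpos0]
            have : (i0:ℝ) ≤ (i:ℝ) := by exact_mod_cast h
            linarith
          nlinarith [mul_nonneg (sub_nonneg.2 hco) hdi]
      calc ∑ i ∈ Finset.range N, d i
          ≤ ∑ i ∈ Finset.range N, (((i:ℝ)+1)/((i0:ℝ)+1)) * d i := Finset.sum_le_sum hpt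
        _ = (1/((i0:ℝ)+1)) * ∑ i ∈ Finset.range N, ((i:ℝ)+1) * d i := by
            rw [Finset.mul_sum]
            apply Finset.sum_congr rfl; intro i _; ring
        _ = 0 := by rw [hw]; ring
    · push_neg at hex
      exact Finset.sum_nonpos (fun i hi => hex i (Finset.mem_range.mp hi))
  linarith [hu, hsum]

lemma Pb_symm {m k j : ℕ} (hm : 1 ≤ m) (hk : k ≤ m) (hj : j ≤ m) :
    Pb m k j = Pb m (m-k) (m-j) := by
  have hm' : (0:ℝ) < m := by exact_mod_cast hm
  unfold Pb
  have h1 : m.choose j = m.choose (m-j) := (Nat.choose_symm hj).symm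
  have c1 : ((m-k:ℕ):ℝ) = (m:ℝ) - k := by push_cast [Nat.cast_sub hk]; ring
  have h2 : ((m-k:ℕ):ℝ)/m = 1 - (k:ℝ)/m := by rw [c1]; field_simp
  have h3 : 1 - ((m-k:ℕ):ℝ)/m = (k:ℝ)/m := by rw [c1]; field_simp; ring
  have h4 : m - (m-j) = j := by omega
  rw [h1, h4, h2]
  ring

lemma Pb_zero_left {m j : ℕ} (hm : 1 ≤ m) (hj : 1 ≤ j) : Pb m 0 j = 0 := by
  unfold Pb
  have : ((0:ℕ):ℝ)/m = 0 := by simp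
  rw [this, zero_pow (by omega : j ≠ 0)]
  ring

lemma sideA_sum {m k : ℕ} (h2k : 2*k ≤ m) :
    ∑ j ∈ Finset.range k, Pb m k j ≤ ∑ i ∈ Finset.range (m+1-k), Pb m k (k+i) := by
  rcases Nat.eq_zero_or_pos k with hk0 | hk1
  · subst hk0
    simp only [Finset.range_zero, Finset.sum_empty]
    apply Finset.sum_nonneg
    intro i _
    exact Pb_nonneg (by omega)
  have step1 : ∑ j ∈ Finset.range k, Pb m k j = ∑ i ∈ Finset.range k, Pb m k (k-(i+1)) := by
    rw [← Finset.sum_range_reflect (fun j => Pb m k j) k]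
    apply Finset.sum_congr rfl
    intro i hi
    rw [Finset.mem_range] at hi
    congr 1
    omega
  have step2 : ∀ i ∈ Finset.range k, Pb m k (k-(i+1)) ≤ Pb m k (k+i) := by
    intro i hi
    rw [Finset.mem_range] at hi
    have := sideA_point hk1 h2k (i+1) (by omega) (by omega)
    have e : k + (i+1) - 1 = k + i := by omega
    rwa [e] at this
  have step3 : ∑ i ∈ Finset.range k, Pb m k (k+i) ≤ ∑ i ∈ Finset.range (m+1-k), Pb m k (k+i) := by
    apply Finset.sum_le_sum_of_subset_of_nonneg
    · apply Finset.range_subset_range.mpr; omega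
    · intro i _ _; exact Pb_nonneg (by omega)
  calc ∑ j ∈ Finset.range k, Pb m k j
      = ∑ i ∈ Finset.range k, Pb m k (k-(i+1)) := step1
    _ ≤ ∑ i ∈ Finset.range k, Pb m k (k+i) := Finset.sum_le_sum step2
    _ ≤ ∑ i ∈ Finset.range (m+1-k), Pb m k (k+i) := step3

lemma Pb_median {m k : ℕ} (hm : 1 ≤ m) (hk : k ≤ m) :
    (1:ℝ)/2 ≤ ∑ i ∈ Finset.range (m+1-k), Pb m k (k+i) := by
  have htot : ∑ j ∈ Finset.range (m+1), Pb m k j = 1 := Pb_sum hm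
  have hsplit : ∑ j ∈ Finset.range (m+1), Pb m k j
      = (∑ j ∈ Finset.range k, Pb m k j) + ∑ i ∈ Finset.range (m+1-k), Pb m k (k+i) := by
    rw [Finset.range_eq_Ico,
      ← Finset.sum_Ico_consecutive _ (by omega : 0 ≤ k) (by omega : k ≤ m+1),
      ← Finset.range_eq_Ico, Finset.sum_Ico_eq_sum_range]
  by_cases h2k : 2*k ≤ m
  · have hA := sideA_sum (m := m) (k := k) h2k
    rw [hsplit] at htot
    linarith [hA, htot]
  · -- symmetric case
    push_neg at h2k
    set q := m - k with hq
    have hkq : k = m - q := by omega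
    have h2q : 2*q ≤ m := by omega
    have htrans : ∑ i ∈ Finset.range (m+1-k), Pb m k (k+i)
        = ∑ j ∈ Finset.range (q+1), Pb m q j := by
      have e : m+1-k = q+1 := by omega
      rw [e]
      rw [← Finset.sum_range_reflect (fun j => Pb m q j) (q+1)]
      apply Finset.sum_congr rfl
      intro i hi
      rw [Finset.mem_range] at hi
      have e2 : q + 1 - 1 - i = q - i := by omega
      rw [e2]
      have := Pb_symm (m := m) (k := k) (j := k + i) hm hk (by omega)
      rw [this]
      congr 1
      omega
    rw [htrans]
    -- now need: 1/2 ≤ ∑_{j ≤ q} Pb m q j  where 2q ≤ m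
    have htotq : ∑ j ∈ Finset.range (m+1), Pb m q j = 1 := Pb_sum hm
    have hsplitq : ∑ j ∈ Finset.range (m+1), Pb m q j
        = (∑ j ∈ Finset.range (q+1), Pb m q j) + ∑ i ∈ Finset.range (m-q), Pb m q (q+(i+1)) := by
      rw [Finset.range_eq_Ico,
        ← Finset.sum_Ico_consecutive _ (by omega : 0 ≤ q+1) (by omega : q+1 ≤ m+1),
        ← Finset.range_eq_Ico, Finset.sum_Ico_eq_sum_range]
      have e3 : m + 1 - (q+1) = m - q := by omega
      rw [e3]
      congr 1
      apply Finset.sum_congr rfl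
      intro i _
      congr 1
      omega
    rcases Nat.eq_zero_or_pos q with hq0 | hq1
    · -- k = m
      have hz : ∑ i ∈ Finset.range (m-q), Pb m q (q+(i+1)) = 0 := by
        apply Finset.sum_eq_zero
        intro i _
        rw [hq0]
        exact Pb_zero_left hm (by omega)
      rw [hsplitq, hz] at htotq
      linarith
    · have hB := sideB_sum (m := m) (k := q) hq1 h2q
      have hhead : ∑ i ∈ Finset.range q, Pb m q (q-(i+1)) ≤ ∑ j ∈ Finset.range (q+1), Pb m q j := by
        have e4 : ∑ i ∈ Finset.range q, Pb m q (q-(i+1)) = ∑ j ∈ Finset.range q, Pb m q j := by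
          rw [← Finset.sum_range_reflect (fun j => Pb m q j) q]
          apply Finset.sum_congr rfl
          intro i hi
          rw [Finset.mem_range] at hi
          congr 1
          omega
        rw [e4, Finset.sum_range_succ]
        have := Pb_nonneg (m := m) (k := q) (j := q) (by omega)
        linarith
      rw [hsplitq] at htotq
      linarith [hB, hhead, htotq]

lemma ones_le {m : ℕ} (v : Fin m → Bool) : ones v ≤ m := by
  unfold ones
  calc (Finset.univ.filter (fun i => v i = true)).card
      ≤ (Finset.univ : Finset (Fin m)).card := Finset.card_filter_le _ _
    _ = m := by simp

lemma card_false {m : ℕ} (v : Fin m → Bool) :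
    (Finset.univ.filter (fun i => v i = false)).card = m - ones v := by
  have h := Finset.card_filter_add_card_filter_not
    (s := (Finset.univ : Finset (Fin m))) (p := fun i => v i = true)
  have h2 : (Finset.univ.filter (fun i => ¬ v i = true)).card
      = (Finset.univ.filter (fun i => v i = false)).card := by
    congr 1
    apply Finset.filter_congr
    intro i _
    simp
  simp only [Finset.card_univ, Fintype.card_fin] at h
  unfold ones
  omega

lemma card_Bset (m j : ℕ) : (Bset m j).card = m.choose j := by
  classical
  have hpc : (Finset.powersetCard j (Finset.univ : Finset (Fin m))).card = m.choose j := by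
    rw [Finset.card_powersetCard, Finset.card_univ, Fintype.card_fin]
  rw [← hpc]
  apply Finset.card_bij' (i := fun v _ => Finset.univ.filter (fun x => v x = true))
      (j := fun S _ => fun x => decide (x ∈ S))
  case hi =>
    intro v hv
    rw [Finset.mem_powersetCard]
    refine ⟨Finset.filter_subset _ _, ?_⟩
    unfold Bset at hv
    rw [Finset.mem_filter] at hv
    exact hv.2
  case hj =>
    intro S hS
    rw [Finset.mem_powersetCard] at hS
    unfold Bset
    rw [Finset.mem_filter]
    refine ⟨Finset.mem_univ _, ?_⟩
    unfold ones
    rw [← hS.2]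
    congr 1
    ext x
    simp
  case left_inv =>
    intro v hv
    funext x
    simp
  case right_inv =>
    intro S hS
    ext x
    simp

lemma ones_update_true {m : ℕ} (v : Fin m → Bool) (i : Fin m) (hvi : v i = false) :
    ones (Function.update v i true) = ones v + 1 := by
  classical
  unfold ones
  have h : (Finset.univ.filter (fun x => Function.update v i true x = true))
      = insert i (Finset.univ.filter (fun x => v x = true)) := by
    ext x
    simp only [Finset.mem_filter, Finset.mem_univ, true_and, Finset.mem_insert]
    by_cases hx : x = i
    · subst hx
      simp [Function.update_self]
    · rw [Function.update_of_ne hx]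
      simp [hx]
  rw [h, Finset.card_insert_of_notMem]
  simp [hvi]

lemma mem_Bset_ones {m k : ℕ} {v : Fin m → Bool} (h : v ∈ Bset m k) : ones v = k := by
  unfold Bset at h
  rw [Finset.mem_filter] at h
  exact h.2

lemma count_step {m : ℕ} (Q : (Fin m → Bool) → Prop) [DecidablePred Q]
    (hQ : ∀ v i, Q v → Q (Function.update v i true)) (j : ℕ) (hj : j < m) :
    ((Bset m j).filter Q).card * (m - j) ≤ ((Bset m (j+1)).filter Q).card * (j+1) := by
  classical
  set s := (Bset m j).filter Q with hs
  set t := (Bset m (j+1)).filter Q with ht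
  set S : Finset ((Fin m → Bool) × Fin m) :=
    (s ×ˢ Finset.univ).filter (fun p => p.1 p.2 = false) with hS
  have hcardS : S.card = s.card * (m - j) := by
    have hmap : ∀ x ∈ S, x.1 ∈ s := by
      intro x hx
      rw [hS, Finset.mem_filter, Finset.mem_product] at hx
      exact hx.1.1
    rw [Finset.card_eq_sum_card_fiberwise hmap]
    have hfib : ∀ v ∈ s, (S.filter (fun x => x.1 = v)).card = m - j := by
      intro v hv
      have himg : (S.filter (fun x => x.1 = v))
          = ((Finset.univ.filter (fun i => v i = false)).image (fun i => (v, i))) := by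
        ext x
        simp only [hS, Finset.mem_filter, Finset.mem_product, Finset.mem_univ, true_and,
          and_true, Finset.mem_image]
        constructor
        · rintro ⟨⟨h1, h2⟩, h3⟩
          subst h3
          exact ⟨x.2, h2, Prod.mk.eta⟩
        · rintro ⟨i, hi1, hi2⟩
          subst hi2
          exact ⟨⟨hv, hi1⟩, rfl⟩
      rw [himg, Finset.card_image_of_injective _ (fun a b hab => by injection hab),
        card_false, mem_Bset_ones (Finset.mem_filter.mp hv).1]
    rw [Finset.sum_congr rfl hfib, Finset.sum_const, smul_eq_mul]
  have hup : S.card ≤ (j+1) * t.card := by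
    apply Finset.card_le_mul_card_image_of_maps_to
      (f := fun x => Function.update x.1 x.2 true)
    · intro x hx
      rw [hS, Finset.mem_filter, Finset.mem_product] at hx
      obtain ⟨⟨hx1, _⟩, hx2⟩ := hx
      rw [ht, Finset.mem_filter]
      rw [hs, Finset.mem_filter] at hx1
      constructor
      · unfold Bset
        rw [Finset.mem_filter]
        refine ⟨Finset.mem_univ _, ?_⟩
        rw [ones_update_true _ _ hx2, mem_Bset_ones hx1.1]
      · exact hQ _ _ hx1.2
    · intro w hw
      have hcard : (Finset.univ.filter (fun i => w i = true)).card = j+1 := by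
        have := mem_Bset_ones (Finset.mem_filter.mp hw).1
        unfold ones at this
        exact this
      rw [← hcard]
      apply Finset.card_le_card_of_injOn (fun x => x.2)
      · intro x hx
        rw [Finset.mem_coe, Finset.mem_filter] at hx
        obtain ⟨hxS, hxf⟩ := hx
        rw [Finset.mem_coe, Finset.mem_filter]
        refine ⟨Finset.mem_univ _, ?_⟩
        rw [← hxf]
        simp [Function.update_self]
      · intro x hx y hy hxy
        simp only [Finset.coe_filter, Set.mem_setOf_eq] at hx hy
        obtain ⟨hxS, hxf⟩ := hx
        obtain ⟨hyS, hyf⟩ := hy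
        rw [hS, Finset.mem_filter] at hxS hyS
        have hxy' : x.2 = y.2 := hxy
        have h2 : x.1 = y.1 := by
          funext a
          by_cases ha : a = x.2
          · subst ha
            rw [hxS.2, hxy']
            exact hyS.2.symm
          · have e1 : x.1 a = Function.update x.1 x.2 true a := by
              rw [Function.update_of_ne ha]
            have e2 : y.1 a = Function.update y.1 y.2 true a := by
              rw [Function.update_of_ne (fun h => ha (h.trans hxy'.symm))]
            rw [e1, e2, hxf, hyf]
        exact Prod.ext h2 hxy'
  calc s.card * (m - j) = S.card := hcardS.symm
    _ ≤ (j+1) * t.card := hup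
    _ = t.card * (j+1) := by ring

lemma count_mono {m : ℕ} (Q : (Fin m → Bool) → Prop) [DecidablePred Q]
    (hQ : ∀ v i, Q v → Q (Function.update v i true)) {k j : ℕ} (hkj : k ≤ j) (hjm : j ≤ m) :
    ((Bset m k).filter Q).card * m.choose j ≤ ((Bset m j).filter Q).card * m.choose k := by
  induction j, hkj using Nat.le_induction with
  | base => exact le_rfl
  | succ j hkj IH =>
    have hjm' : j ≤ m := by omega
    have IH' := IH hjm'
    have hstep := count_step Q hQ j (by omega)
    have hch : m.choose (j+1) * (j+1) = m.choose j * (m - j) := Nat.choose_succ_right_eq m j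
    have key : ((Bset m k).filter Q).card * m.choose (j+1) * (j+1)
        ≤ ((Bset m (j+1)).filter Q).card * m.choose k * (j+1) := by
      calc ((Bset m k).filter Q).card * m.choose (j+1) * (j+1)
          = ((Bset m k).filter Q).card * (m.choose (j+1) * (j+1)) := by ring
        _ = ((Bset m k).filter Q).card * (m.choose j * (m-j)) := by rw [hch]
        _ = (((Bset m k).filter Q).card * m.choose j) * (m-j) := by ring
        _ ≤ (((Bset m j).filter Q).card * m.choose k) * (m-j) := Nat.mul_le_mul_right _ IH'
        _ = (((Bset m j).filter Q).card * (m-j)) * m.choose k := by ring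
        _ ≤ (((Bset m (j+1)).filter Q).card * (j+1)) * m.choose k := Nat.mul_le_mul_right _ hstep
        _ = ((Bset m (j+1)).filter Q).card * m.choose k * (j+1) := by ring
    exact Nat.le_of_mul_le_mul_right key (by omega)

lemma supQual_update {ι : Type*} [Nonempty ι] {m : ℕ} (F : ι → Fin m → Bool) (μb : ℝ)
    (v : Fin m → Bool) (i0 : Fin m) :
    supQual F μb v ≤ supQual F μb (Function.update v i0 true) := by
  classical
  unfold supQual
  apply ciSup_mono
  · refine ⟨(1/(m:ℝ)) * ((m:ℝ) * (1 + |μb|)), ?_⟩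
    rintro x ⟨P, rfl⟩
    have hb : ∀ i : Fin m, (if F P i then (1:ℝ) else 0) *
        ((if Function.update v i0 true i then (1:ℝ) else 0) - μb) ≤ 1 + |μb| := by
      intro i
      have h1 : -μb ≤ |μb| := neg_le_abs μb
      have h2 : (0:ℝ) ≤ 1 + |μb| := by positivity
      split_ifs with hF hv <;> simp only [one_mul, zero_mul] <;> linarith
    calc (1/(m:ℝ)) * ∑ i, (if F P i then (1:ℝ) else 0) *
          ((if Function.update v i0 true i then (1:ℝ) else 0) - μb)
        ≤ (1/(m:ℝ)) * ∑ _i : Fin m, (1 + |μb|) := by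
          apply mul_le_mul_of_nonneg_left _ (by positivity)
          exact Finset.sum_le_sum (fun i _ => hb i)
      _ = (1/(m:ℝ)) * ((m:ℝ) * (1 + |μb|)) := by
          rw [Finset.sum_const, Finset.card_univ, Fintype.card_fin, nsmul_eq_mul]
  · intro P
    apply mul_le_mul_of_nonneg_left _ (by positivity)
    apply Finset.sum_le_sum
    intro i _
    apply mul_le_mul_of_nonneg_left _ (by positivity)
    have hv : (if v i then (1:ℝ) else 0) ≤ (if Function.update v i0 true i then (1:ℝ) else 0) := by
      by_cases hi : i = i0
      · subst hi
        rw [Function.update_self, if_pos rfl]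
        split_ifs <;> norm_num
      · rw [Function.update_of_ne hi]
    linarith

lemma bw_eq {m : ℕ} (p : ℝ) (v : Fin m → Bool) :
    bw p v = p^(ones v) * (1-p)^(m - ones v) := by
  classical
  unfold bw
  rw [← Finset.prod_filter_mul_prod_filter_not Finset.univ (fun i => v i = true)]
  have h1 : ∏ i ∈ Finset.univ.filter (fun i => v i = true), (if v i then p else 1-p)
      = p^(ones v) := by
    rw [Finset.prod_congr rfl (g := fun _ => p) ?_, Finset.prod_const]
    · rfl
    · intro i hi
      rw [Finset.mem_filter] at hi
      rw [if_pos hi.2]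
  have h2 : ∏ i ∈ Finset.univ.filter (fun i => ¬ v i = true), (if v i then p else 1-p)
      = (1-p)^(m - ones v) := by
    rw [Finset.prod_congr rfl (g := fun _ => 1-p) ?_, Finset.prod_const]
    · congr 1
      rw [← card_false v]
      congr 1
      apply Finset.filter_congr
      intro i _
      simp
    · intro i hi
      rw [Finset.mem_filter] at hi
      rw [if_neg hi.2]
  rw [h1, h2]

/-- Tail probabilities of the supremum deviation under `U(B(k))` are at most twice
those under the i.i.d. Bernoulli distribution `I(k/m)`. -/
theorem stmt3 {ι : Type*} [Nonempty ι] (m : ℕ) (hm : 1 ≤ m)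
    (F : ι → Fin m → Bool) (k : ℕ) (hk : k ≤ m) (μb : ℝ) (hμ : μb = (k : ℝ) / m)
    (z : ℝ) (hz : 0 ≤ z) :
    (((Bset m k).filter (fun v => z ≤ supQual F μb v)).card : ℝ) / (Bset m k).card ≤
    2 * ∑ v ∈ Finset.univ.filter (fun v : Fin m → Bool => z ≤ supQual F μb v), bw μb v := by
  classical
  set Q : (Fin m → Bool) → Prop := fun v => z ≤ supQual F μb v with hQdef
  have hQ : ∀ v i, Q v → Q (Function.update v i true) := by
    intro v i hv
    exact le_trans hv (supQual_update F μb v i)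
  have hm' : (0:ℝ) < m := by exact_mod_cast hm
  have hp0 : (0:ℝ) ≤ μb := by rw [hμ]; positivity
  have hp1 : μb ≤ 1 := by
    rw [hμ, div_le_one hm']
    exact_mod_cast hk
  have hq0 : (0:ℝ) ≤ 1 - μb := by linarith
  -- RHS sum as a sum over levels
  have hlevel : ∑ v ∈ Finset.univ.filter Q, bw μb v
      = ∑ j ∈ Finset.range (m+1),
          (((Bset m j).filter Q).card : ℝ) * (μb^j * (1-μb)^(m-j)) := by
    rw [← Finset.sum_fiberwise_of_maps_to (g := fun v => ones v) (t := Finset.range (m+1))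
      (fun v _ => Finset.mem_range.mpr (by show ones v < m+1; have := ones_le v; omega))]
    apply Finset.sum_congr rfl
    intro j _
    have hset : (Finset.univ.filter Q).filter (fun v => ones v = j)
        = (Bset m j).filter Q := by
      unfold Bset
      rw [Finset.filter_filter, Finset.filter_filter]
      apply Finset.filter_congr
      intro v _
      constructor
      · rintro ⟨a, b⟩; exact ⟨b, a⟩
      · rintro ⟨a, b⟩; exact ⟨b, a⟩
    rw [hset]
    rw [Finset.sum_congr rfl (g := fun _ => μb^j * (1-μb)^(m-j)) ?_, Finset.sum_const,
      nsmul_eq_mul]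
    intro v hv
    rw [Finset.mem_filter] at hv
    have hov : ones v = j := by
      unfold Bset at hv
      rw [Finset.mem_filter] at hv
      exact hv.1.2
    rw [bw_eq, hov]
  -- each term is at least the k-level fraction times Pb
  have hNk : (((Bset m k).filter Q).card : ℝ) / ((Bset m k).card : ℝ)
      = (((Bset m k).filter Q).card : ℝ) / (m.choose k : ℝ) := by
    rw [card_Bset]
  have hchk : (0:ℝ) < (m.choose k : ℝ) := by exact_mod_cast Nat.choose_pos hk
  have hterm : ∀ i ∈ Finset.range (m+1-k),
      (((Bset m k).filter Q).card : ℝ) / (m.choose k : ℝ) * Pb m k (k+i)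
        ≤ (((Bset m (k+i)).filter Q).card : ℝ) * (μb^(k+i) * (1-μb)^(m-(k+i))) := by
    intro i hi
    rw [Finset.mem_range] at hi
    have hcm := count_mono Q hQ (k := k) (j := k+i) (by omega) (by omega)
    have hcm' : (((Bset m k).filter Q).card : ℝ) * (m.choose (k+i) : ℝ)
        ≤ (((Bset m (k+i)).filter Q).card : ℝ) * (m.choose k : ℝ) := by exact_mod_cast hcm
    have hfrac : (((Bset m k).filter Q).card : ℝ) / (m.choose k : ℝ) * (m.choose (k+i) : ℝ)
        ≤ (((Bset m (k+i)).filter Q).card : ℝ) := by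
      rw [div_mul_eq_mul_div, div_le_iff₀ hchk]
      exact hcm'
    have hPb : Pb m k (k+i) = (m.choose (k+i) : ℝ) * (μb^(k+i) * (1-μb)^(m-(k+i))) := by
      unfold Pb
      rw [hμ]
      ring
    rw [hPb]
    have hmono : (0:ℝ) ≤ μb^(k+i) * (1-μb)^(m-(k+i)) := by positivity
    calc (((Bset m k).filter Q).card : ℝ) / (m.choose k : ℝ)
          * ((m.choose (k+i) : ℝ) * (μb^(k+i) * (1-μb)^(m-(k+i))))
        = ((((Bset m k).filter Q).card : ℝ) / (m.choose k : ℝ) * (m.choose (k+i) : ℝ))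
          * (μb^(k+i) * (1-μb)^(m-(k+i))) := by ring
      _ ≤ (((Bset m (k+i)).filter Q).card : ℝ) * (μb^(k+i) * (1-μb)^(m-(k+i))) :=
          mul_le_mul_of_nonneg_right hfrac hmono
  -- split the level sum
  have hsplit : ∑ j ∈ Finset.range (m+1),
      (((Bset m j).filter Q).card : ℝ) * (μb^j * (1-μb)^(m-j))
      = (∑ j ∈ Finset.range k, (((Bset m j).filter Q).card : ℝ) * (μb^j * (1-μb)^(m-j)))
        + ∑ i ∈ Finset.range (m+1-k),
            (((Bset m (k+i)).filter Q).card : ℝ) * (μb^(k+i) * (1-μb)^(m-(k+i))) := by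
    rw [Finset.range_eq_Ico,
      ← Finset.sum_Ico_consecutive _ (by omega : 0 ≤ k) (by omega : k ≤ m+1),
      ← Finset.range_eq_Ico, Finset.sum_Ico_eq_sum_range]
  have hhead : (0:ℝ) ≤ ∑ j ∈ Finset.range k,
      (((Bset m j).filter Q).card : ℝ) * (μb^j * (1-μb)^(m-j)) := by
    apply Finset.sum_nonneg
    intro j _
    positivity
  have htail : (((Bset m k).filter Q).card : ℝ) / (m.choose k : ℝ) * (1/2)
      ≤ ∑ i ∈ Finset.range (m+1-k),
          (((Bset m (k+i)).filter Q).card : ℝ) * (μb^(k+i) * (1-μb)^(m-(k+i))) := by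
    calc (((Bset m k).filter Q).card : ℝ) / (m.choose k : ℝ) * (1/2)
        ≤ (((Bset m k).filter Q).card : ℝ) / (m.choose k : ℝ)
            * ∑ i ∈ Finset.range (m+1-k), Pb m k (k+i) := by
          apply mul_le_mul_of_nonneg_left (Pb_median hm hk) (by positivity)
      _ = ∑ i ∈ Finset.range (m+1-k),
            (((Bset m k).filter Q).card : ℝ) / (m.choose k : ℝ) * Pb m k (k+i) := by
          rw [Finset.mul_sum]
      _ ≤ ∑ i ∈ Finset.range (m+1-k),
            (((Bset m (k+i)).filter Q).card : ℝ) * (μb^(k+i) * (1-μb)^(m-(k+i))) :=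
          Finset.sum_le_sum hterm
  rw [hNk, hlevel, hsplit]
  linarith [hhead, htail]
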